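/- Let L, U : Fin (n+1) → ℝ and define M : Fin (n+1) → ℝ by M k = max (L k) (U k). Then for every DBM D over n clocks, Extra_M(D) i j ≤ Extra_LU(D) i j for all i, j, and consequently ⟦D⟧ ⊆ ⟦Extra_M(D)⟧ ⊆ ⟦Extra_LU(D)⟧. -/

import Mathlib

/-- A DBM over `n` clocks: index `0` is the reference clock. -/
abbrev DBM (n : ℕ) := Fin (n + 1) → Fin (n + 1) → WithTop ℝ

/-- The zone of a DBM. -/
def Zone {n : ℕ} (D : DBM n) : Set (Fin (n + 1) → ℝ) :=
  {v | v 0 = 0 ∧ ∀ i j, ((v i - v j : ℝ) : WithTop ℝ) ≤ D i j}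

/-- The `M`-extrapolation of a DBM. -/
noncomputable def ExtraM {n : ℕ} (M : Fin (n + 1) → ℝ) (D : DBM n) : DBM n := fun i j =>
  if ((M i : ℝ) : WithTop ℝ) < D i j then ⊤
  else if D i j < ((-(M j) : ℝ) : WithTop ℝ) then ((-(M j) : ℝ) : WithTop ℝ)
  else D i j

/-- The `LU`-extrapolation of a DBM (cases tested in order). -/
noncomputable def ExtraLU {n : ℕ} (L U : Fin (n + 1) → ℝ) (D : DBM n) : DBM n := fun i j =>
  if ((L i : ℝ) : WithTop ℝ) < D i j then ⊤
  else if D i j < ((-(U j) : ℝ) : WithTop ℝ) then ((-(U j) : ℝ) : WithTop ℝ)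
  else D i j

/-! `Extra_M` is `Extra_LU` with `L = U = M`, and `Extra_LU` only loosens entries more when its
bounds shrink; since `max (L k) (U k)` dominates both `L k` and `U k`, the comparison follows.
Every extrapolation only loosens entries of `D`, and zones are monotone in the DBM. -/

section Extrapolation

variable {n : ℕ}

theorem zone_mono {A B : DBM n} (h : A ≤ B) : Zone A ⊆ Zone B :=
  fun _ hv => ⟨hv.1, fun i j => (hv.2 i j).trans (h i j)⟩

theorem extraM_eq_extraLU (M : Fin (n + 1) → ℝ) : ExtraM (n := n) M = ExtraLU M M := rfl

theorem le_extraLU (L U : Fin (n + 1) → ℝ) (D : DBM n) : D ≤ ExtraLU L U D := by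
  intro i j
  simp only [ExtraLU]
  split_ifs with _ hlow
  · exact le_top
  · exact hlow.le
  · exact le_rfl

theorem extraLU_antitone {L L' U U' : Fin (n + 1) → ℝ} (hL : L ≤ L') (hU : U ≤ U') (D : DBM n) :
    ExtraLU L' U' D ≤ ExtraLU L U D := by
  intro i j
  have hLi : ((L i : ℝ) : WithTop ℝ) ≤ L' i := WithTop.coe_le_coe.mpr (hL i)
  have hUj : ((-U' j : ℝ) : WithTop ℝ) ≤ ((-U j : ℝ) : WithTop ℝ) :=
    WithTop.coe_le_coe.mpr (neg_le_neg (hU j))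
  simp only [ExtraLU]
  split_ifs <;> first | exact le_top | order

end Extrapolation

/-- with `M k = max (L k) (U k)`, the `LU`-extrapolation is coarser than the
`M`-extrapolation, and `⟦D⟧ ⊆ ⟦Extra_M(D)⟧ ⊆ ⟦Extra_LU(D)⟧`. -/
theorem extraM_le_extraLU_and_zone_subsets {n : ℕ} (L U : Fin (n + 1) → ℝ) (D : DBM n) :
    (∀ i j, ExtraM (fun k => max (L k) (U k)) D i j ≤ ExtraLU L U D i j) ∧
      Zone D ⊆ Zone (ExtraM (fun k => max (L k) (U k)) D) ∧
      Zone (ExtraM (fun k => max (L k) (U k)) D) ⊆ Zone (ExtraLU L U D) := by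
  have hMLU : ExtraM (fun k => max (L k) (U k)) D ≤ ExtraLU L U D := by
    rw [extraM_eq_extraLU]
    exact extraLU_antitone (fun k => le_max_left _ _) (fun k => le_max_right _ _) D
  refine ⟨hMLU, zone_mono ?_, zone_mono hMLU⟩
  rw [extraM_eq_extraLU]
  exact le_extraLU _ _ D
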